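/- arXiv:2206.06886 — 8 statements merged into one kernel-verified Lean document; each statement's English description precedes it below -/
import Mathlib

section
/- Let E : Ω → ℝ be an energy function, β > 0, and let π be the Gibbs distribution π_x = e^{-βE_x}/Z_β with Z_β = Σ_x e^{-βE_x}. Let P be the transition matrix of a propose-accept/reject Markov chain with symmetric proposal matrix S = Σ_{k=1}^κ w_k Π_k and acceptance matrix A with entries in (0,1], a_{xx}=1. Let Q = D^{-1/2} P D^{1/2} be its discriminant matrix, where D = diag(π_x). Then Q = (G ⊙ A) ⊙ S + R, where G is the matrix with entries g_{yx} = e^{βΔ_{yx}/2}, Δ_{yx} = E_y − E_x, and R = Σ_{k=1}^κ w_k Π_k^T ((J − A) ⊙ Π_k). -/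
/-!
Each `Πₖᵀ (B ⊙ Πₖ)` is diagonal with entries `B (σₖ x) x`, so `R` is the diagonal matrix of
rejection probabilities `1 - ∑ y, a_{yx} s_{yx}` (the columns of `S` sum to `1`), and hence
`P = A ⊙ S + R`. Conjugation by `D^{1/2}` multiplies the `(y, x)` entry by
`√(π_x / π_y) = e^{βΔ_{yx}/2}`, which leaves diagonal matrices unchanged.
-/

open Matrix Finset

namespace Matrix

variable {α Ω ι : Type*} [DecidableEq Ω]

theorem hadamard_diagonal_of_diag_eq_one [MulZeroOneClass α] {G : Matrix Ω Ω α}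
    (hG : ∀ x, G x x = 1) (c : Ω → α) : G ⊙ diagonal c = diagonal c := by
  rw [hadamard_diagonal_eq_diagonal_iff]
  ext x
  simp [hG]

variable [Fintype Ω]

section PermutationMixture

variable [CommSemiring α] [Fintype ι]

theorem sum_mul_apply_of_perm {σ : Equiv.Perm Ω} {M : Matrix Ω Ω α}
    (hM : ∀ v u, M v u = if v = σ u then 1 else 0) (B : Matrix Ω Ω α) (x : Ω) :
    ∑ y, B y x * M y x = B (σ x) x := by
  simp [hM]

theorem transpose_mul_hadamard_of_perm {σ : Equiv.Perm Ω} {M : Matrix Ω Ω α}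
    (hM : ∀ v u, M v u = if v = σ u then 1 else 0) (B : Matrix Ω Ω α) :
    Mᵀ * (B ⊙ M) = diagonal fun x => B (σ x) x := by
  ext y x
  by_cases hyx : y = x
  · simp [hyx, mul_apply, hM]
  · simp [hyx, Ne.symm hyx, mul_apply, hM]

variable {w : ι → α} {σ : ι → Equiv.Perm Ω} {M : ι → Matrix Ω Ω α} {S : Matrix Ω Ω α}

theorem sum_mul_apply_of_perm_mixture (hM : ∀ k v u, M k v u = if v = σ k u then 1 else 0)
    (hS : S = ∑ k, w k • M k) (B : Matrix Ω Ω α) (x : Ω) :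
    ∑ y, B y x * S y x = ∑ k, w k * B (σ k x) x := by
  simp only [hS, sum_apply, smul_apply, smul_eq_mul, mul_sum]
  rw [sum_comm]
  refine sum_congr rfl fun k _ => ?_
  rw [← sum_mul_apply_of_perm (hM k) B x, mul_sum]
  exact sum_congr rfl fun y _ => by ring

theorem sum_smul_transpose_mul_hadamard_of_perm_mixture
    (hM : ∀ k v u, M k v u = if v = σ k u then 1 else 0) (hS : S = ∑ k, w k • M k)
    (B : Matrix Ω Ω α) :
    ∑ k, w k • ((M k)ᵀ * (B ⊙ M k)) = diagonal fun x => ∑ y, B y x * S y x := by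
  simp only [transpose_mul_hadamard_of_perm (hM _), sum_mul_apply_of_perm_mixture hM hS]
  ext y x
  by_cases hyx : y = x <;> simp [hyx, sum_apply]

end PermutationMixture

theorem eq_add_diagonal_one_sub_sum [CommRing α] {M P : Matrix Ω Ω α}
    (h_off : ∀ y x, y ≠ x → P y x = M y x)
    (h_diag : ∀ x, P x x = 1 - ∑ y ∈ univ \ {x}, M y x) :
    P = M + diagonal fun x => 1 - ∑ y, M y x := by
  ext y x
  by_cases hyx : y = x
  · subst hyx
    rw [h_diag, add_apply, diagonal_apply_eq, sdiff_singleton_eq_erase,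
      ← add_sum_erase _ _ (mem_univ y)]
    ring
  · simp [h_off y x hyx, hyx]

theorem diagonal_inv_mul_mul_diagonal [Field α] (d : Ω → α) (M : Matrix Ω Ω α) :
    diagonal (fun x => (d x)⁻¹) * M * diagonal d = (of fun y x => (d y)⁻¹ * d x) ⊙ M := by
  ext y x
  simp only [mul_diagonal, diagonal_mul, hadamard_apply, of_apply]
  ring

end Matrix

theorem inv_sqrt_mul_sqrt_gibbs {Ω : Type*} [Fintype Ω] {E : Ω → ℝ} {β Z : ℝ}
    (hZ : Z = ∑ x, Real.exp (-β * E x)) {π : Ω → ℝ}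
    (hπ : ∀ x, π x = Real.exp (-β * E x) / Z) (y x : Ω) :
    (Real.sqrt (π y))⁻¹ * Real.sqrt (π x) = Real.exp (β * (E y - E x) / 2) := by
  have hZ_pos : 0 < Z := hZ ▸ sum_pos (fun _ _ => Real.exp_pos _) ⟨x, mem_univ x⟩
  rw [hπ, hπ, Real.sqrt_div' _ hZ_pos.le, Real.sqrt_div' _ hZ_pos.le, ← Real.exp_half,
    ← Real.exp_half]
  have hZ_sqrt : Real.sqrt Z ≠ 0 := by positivity
  field_simp
  rw [← Real.exp_add]
  ring_nf

theorem stmt_3_general {Ω : Type*} [Fintype Ω] [DecidableEq Ω]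
    (E : Ω → ℝ) (β : ℝ)
    (Z : ℝ) (hZ : Z = ∑ x, Real.exp (-β * E x))
    (π : Ω → ℝ) (hπ : ∀ x, π x = Real.exp (-β * E x) / Z)
    (κ : ℕ) (w : Fin κ → ℝ) (σ : Fin κ → Equiv.Perm Ω)
    (hw_sum : ∑ k, w k = 1)
    (Pm : Fin κ → Matrix Ω Ω ℝ)
    (hPm : ∀ k v u, Pm k v u = if v = σ k u then 1 else 0)
    (S : Matrix Ω Ω ℝ) (hS : S = ∑ k, w k • Pm k)
    (A : Matrix Ω Ω ℝ)
    (P : Matrix Ω Ω ℝ)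
    (hP_off : ∀ y x, y ≠ x → P y x = A y x * S y x)
    (hP_diag : ∀ x, P x x = 1 - ∑ y ∈ Finset.univ \ {x}, A y x * S y x)
    (Q : Matrix Ω Ω ℝ)
    (hQ : Q = Matrix.diagonal (fun x => (Real.sqrt (π x))⁻¹) * P *
      Matrix.diagonal (fun x => Real.sqrt (π x)))
    (G : Matrix Ω Ω ℝ) (hG : ∀ y x, G y x = Real.exp (β * (E y - E x) / 2))
    (J : Matrix Ω Ω ℝ) (hJ : ∀ y x, J y x = 1)
    (R : Matrix Ω Ω ℝ)
    (hR : R = ∑ k, w k • ((Pm k)ᵀ * Matrix.hadamard (J - A) (Pm k))) :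
    Q = Matrix.hadamard (Matrix.hadamard G A) S + R := by
  have hS_col : ∀ x, ∑ y, S y x = 1 := fun x => by
    simpa [hJ, hw_sum] using sum_mul_apply_of_perm_mixture hPm hS J x
  have hR_diag : R = diagonal fun x => 1 - ∑ y, (A ⊙ S) y x := by
    rw [hR, sum_smul_transpose_mul_hadamard_of_perm_mixture hPm hS]
    ext y x
    simp [hJ, sub_mul, hS_col]
  have hP : P = A ⊙ S + R := hR_diag ▸ eq_add_diagonal_one_sub_sum hP_off hP_diag
  have hG_sqrt : G = of fun y x => (Real.sqrt (π y))⁻¹ * Real.sqrt (π x) := by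
    ext y x
    rw [hG, of_apply, inv_sqrt_mul_sqrt_gibbs hZ hπ]
  rw [hQ, diagonal_inv_mul_mul_diagonal, ← hG_sqrt, hP, hadamard_add, hadamard_assoc, hR_diag,
    hadamard_diagonal_of_diag_eq_one (by simp [hG])]

/-- Decomposition of the discriminant matrix of a propose-accept/reject
Markov chain with Gibbs stationary distribution: `Q = (G ⊙ A) ⊙ S + R`, where
`g_{yx} = e^{βΔ_{yx}/2}` and `R = Σ_k w_k Π_kᵀ ((J − A) ⊙ Π_k)`. -/
theorem stmt_3 {Ω : Type*} [Fintype Ω] [DecidableEq Ω]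
    (E : Ω → ℝ) (β : ℝ) (hβ : 0 < β)
    (Z : ℝ) (hZ : Z = ∑ x, Real.exp (-β * E x))
    (π : Ω → ℝ) (hπ : ∀ x, π x = Real.exp (-β * E x) / Z)
    (κ : ℕ) (w : Fin κ → ℝ) (σ : Fin κ → Equiv.Perm Ω)
    (hw_nonneg : ∀ k, 0 ≤ w k) (hw_sum : ∑ k, w k = 1)
    (Pm : Fin κ → Matrix Ω Ω ℝ)
    (hPm : ∀ k v u, Pm k v u = if v = σ k u then 1 else 0)
    (S : Matrix Ω Ω ℝ) (hS : S = ∑ k, w k • Pm k)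
    (A : Matrix Ω Ω ℝ) (hA : ∀ y x, A y x ∈ Set.Ioc (0:ℝ) 1)
    (hA_diag : ∀ x, A x x = 1)
    (P : Matrix Ω Ω ℝ)
    (hP_off : ∀ y x, y ≠ x → P y x = A y x * S y x)
    (hP_diag : ∀ x, P x x = 1 - ∑ y ∈ Finset.univ \ {x}, A y x * S y x)
    (Q : Matrix Ω Ω ℝ)
    (hQ : Q = Matrix.diagonal (fun x => (Real.sqrt (π x))⁻¹) * P *
      Matrix.diagonal (fun x => Real.sqrt (π x)))
    (G : Matrix Ω Ω ℝ) (hG : ∀ y x, G y x = Real.exp (β * (E y - E x) / 2))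
    (J : Matrix Ω Ω ℝ) (hJ : ∀ y x, J y x = 1)
    (R : Matrix Ω Ω ℝ)
    (hR : R = ∑ k, w k • ((Pm k)ᵀ * Matrix.hadamard (J - A) (Pm k))) :
    Q = Matrix.hadamard (Matrix.hadamard G A) S + R :=
  stmt_3_general E β Z hZ π hπ κ w σ hw_sum Pm hPm S hS A P hP_off hP_diag Q hQ G hG J hJ R hR
end

section
/- Let E : Ω → {0,…,B−1} be an energy function and let L ∈ ℂ^{Ω×Ω} be energy-dependent, meaning L_{yx} = g(E_y, E_x) for some function g : {0,…,B−1} × {0,…,B−1} → ℂ, with compressed matrix L̂ ∈ ℂ^{B×B} defined by L̂_{E',E} = g(E',E). Let M ∈ ℂ^{Ω×Ω} be arbitrary, and let T_E : ℂ^Ω → ℂ^B ⊗ ℂ^Ω be the 'energy' isometry defined by T_E|x⟩ = |E_x⟩ ⊗ |x⟩. Then T_E† (L̂ ⊗ M) T_E = L ⊙ M. -/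
/-! `T_E` is the identity matrix with its columns restricted to the graph `x ↦ (E x, x)`, so
`T_E† K T_E` is the restriction of `K` to that graph in both indices. For `K = L̂ ⊗ M` the
restriction has entries `L̂ (E y) (E x) * M y x = L y x * M y x`. -/

open Matrix BigOperators Kronecker

namespace Matrix

variable {ι κ R : Type*} [Fintype ι] [DecidableEq ι] [Semiring R] [StarRing R]

theorem conjTranspose_one_submatrix_mul_mul (φ : κ → ι) (K : Matrix ι ι R) :
    ((1 : Matrix ι ι R).submatrix id φ)ᴴ * K * (1 : Matrix ι ι R).submatrix id φ =
      K.submatrix φ φ := by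
  have hrefl : ((Equiv.refl ι : ι ≃ ι) : ι → ι) = id := rfl
  rw [conjTranspose_submatrix, conjTranspose_one, ← hrefl, one_submatrix_mul,
    mul_submatrix_one]
  simp only [submatrix_submatrix, Equiv.refl_symm, Equiv.coe_refl, Function.id_comp,
    Function.comp_id]

end Matrix

def energyIsometry {Ω β : Type*} [DecidableEq Ω] [DecidableEq β] (R : Type*) [Zero R] [One R]
    (E : Ω → β) : Matrix (β × Ω) Ω R :=
  (1 : Matrix (β × Ω) (β × Ω) R).submatrix id fun x => (E x, x)

theorem energyIsometry_apply {Ω β R : Type*} [DecidableEq Ω] [DecidableEq β] [Zero R] [One R]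
    (E : Ω → β) (e : β) (u x : Ω) :
    energyIsometry R E (e, u) x = if e = E x ∧ u = x then 1 else 0 := by
  simp [energyIsometry, one_apply, Prod.ext_iff]

theorem kronecker_submatrix_graph {Ω β R : Type*} [Mul R] (A : Matrix β β R) (M : Matrix Ω Ω R)
    (E : Ω → β) :
    (A ⊗ₖ M).submatrix (fun x => (E x, x)) (fun x => (E x, x)) = A.submatrix E E ⊙ M :=
  rfl

/-- For an energy-dependent matrix `L` (with `L_{yx} = g(E_y, E_x)`),
its compressed matrix `L̂`, an arbitrary matrix `M`, and the energy isometry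
`T_E|x⟩ = |E_x⟩ ⊗ |x⟩`, one has `T_E† (L̂ ⊗ M) T_E = L ⊙ M`. -/
theorem stmt_7 {Ω : Type*} [Fintype Ω] [DecidableEq Ω] (B : ℕ)
    (E : Ω → Fin B) (g : Fin B → Fin B → ℂ)
    (L : Matrix Ω Ω ℂ) (hL : ∀ y x, L y x = g (E y) (E x))
    (Lhat : Matrix (Fin B) (Fin B) ℂ) (hLhat : ∀ e' e, Lhat e' e = g e' e)
    (M : Matrix Ω Ω ℂ)
    (TE : Matrix (Fin B × Ω) Ω ℂ)
    (hTE : ∀ e u x, TE (e, u) x = if e = E x ∧ u = x then 1 else 0) :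
    TEᴴ * (Lhat ⊗ₖ M) * TE = Matrix.hadamard L M := by
  have hT : TE = energyIsometry ℂ E := by
    ext ⟨e, u⟩ x
    rw [hTE, energyIsometry_apply]
  have hL' : L = Lhat.submatrix E E := by
    ext y x
    rw [hL, submatrix_apply, hLhat]
  rw [hT, energyIsometry, conjTranspose_one_submatrix_mul_mul, kronecker_submatrix_graph, hL']
end

section
/- Let U be a unitary operator on a finite-dimensional complex inner product space H and let T : K → H be an isometry (T†T = I). Define W on ℂ² ⊗ H by W = |0⟩⟨1| ⊗ U + |1⟩⟨0| ⊗ U†, and define the isometry T₊ : K → ℂ² ⊗ H by T₊v = |+⟩ ⊗ (Tv), where |+⟩ = (|0⟩ + |1⟩)/√2. Then W is a reflection (both unitary and self-adjoint, so W² = I), and T₊† W T₊ = ½(T†UT + (T†UT)†); in particular, if Q = T†UT is hermitian, then T₊† W T₊ = Q. -/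
/-!
With matrix units `Eᵢⱼ`, `W = E₀₁ ⊗ U + E₁₀ ⊗ U†`. The relations `E₀₁² = E₁₀² = 0` and
`E₀₁ E₁₀ + E₁₀ E₀₁ = 1` together with unitarity of `U` give `W² = 1`, while `E₀₁† = E₁₀` gives
`W† = W`. Compressing `A ⊗ B` by `x ⊗ T` yields `⟨x, A x⟩ • T† B T`, and
`⟨+, E₀₁ +⟩ = ⟨+, E₁₀ +⟩ = ½`.
-/

open scoped Kronecker

lemma mem_unitary_of_star_eq_of_mul_self {R : Type*} [Monoid R] [StarMul R] {W : R}
    (hstar : star W = W) (hsq : W * W = 1) : W ∈ unitary R :=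
  Unitary.mem_iff.2 ⟨by rw [hstar, hsq], by rw [hstar, hsq]⟩

namespace Matrix

variable {α l n m : Type*} [CommRing α] [StarRing α]

def offDiagDilation [DecidableEq n] (U : Matrix n n α) : Matrix (Fin 2 × n) (Fin 2 × n) α :=
  single 0 1 1 ⊗ₖ U + single 1 0 1 ⊗ₖ Uᴴ

lemma conjTranspose_offDiagDilation [DecidableEq n] (U : Matrix n n α) :
    (offDiagDilation U)ᴴ = offDiagDilation U := by
  simp only [offDiagDilation, conjTranspose_add, conjTranspose_kronecker, conjTranspose_single,
    star_one, conjTranspose_conjTranspose]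
  exact add_comm _ _

lemma offDiagDilation_mul_self [Fintype n] [DecidableEq n] {U : Matrix n n α}
    (hU : U ∈ unitaryGroup n α) : offDiagDilation U * offDiagDilation U = 1 := by
  have hUU : Uᴴ * U = 1 := hU.1
  have hUU' : U * Uᴴ = 1 := hU.2
  have hdiag : (single 0 0 1 + single 1 1 1 : Matrix (Fin 2) (Fin 2) α) = 1 := by
    ext i j; fin_cases i <;> fin_cases j <;> simp
  have h01 : (single 0 1 1 * single 0 1 1 : Matrix (Fin 2) (Fin 2) α) = 0 :=
    single_mul_single_of_ne _ _ _ _ one_ne_zero _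
  have h10 : (single 1 0 1 * single 1 0 1 : Matrix (Fin 2) (Fin 2) α) = 0 :=
    single_mul_single_of_ne _ _ _ _ zero_ne_one _
  simp only [offDiagDilation, add_mul, mul_add, ← mul_kronecker_mul, single_mul_single_same, h01,
    h10, zero_kronecker, hUU, hUU', mul_one, zero_add, add_zero]
  rw [add_comm, ← add_kronecker, hdiag, one_kronecker_one]

lemma offDiagDilation_mem_unitaryGroup [Fintype n] [DecidableEq n] {U : Matrix n n α}
    (hU : U ∈ unitaryGroup n α) : offDiagDilation U ∈ unitaryGroup (Fin 2 × n) α :=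
  mem_unitary_of_star_eq_of_mul_self (conjTranspose_offDiagDilation U)
    (offDiagDilation_mul_self hU)

def kroneckerVec (x : l → α) (T : Matrix n m α) : Matrix (l × n) m α :=
  of fun p k => x p.1 * T p.2 k

lemma conjTranspose_kroneckerVec_mul_kronecker_mul [Fintype l] [Fintype n] (x : l → α)
    (T : Matrix n m α) (A : Matrix l l α) (B : Matrix n n α) :
    (kroneckerVec x T)ᴴ * (A ⊗ₖ B) * kroneckerVec x T = (star x ⬝ᵥ A *ᵥ x) • (Tᴴ * B * T) := by
  ext k k'
  simp only [mul_apply, conjTranspose_apply, kroneckerVec, kroneckerMap_apply, of_apply,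
    Fintype.sum_prod_type, smul_apply, dotProduct, mulVec, smul_eq_mul, Pi.star_apply, star_mul',
    Finset.sum_mul, Finset.mul_sum]
  rw [Finset.sum_comm]
  refine Finset.sum_congr rfl fun j _ => ?_
  rw [Finset.sum_comm, Finset.sum_comm (γ := n)]
  refine Finset.sum_congr rfl fun b _ => ?_
  rw [Finset.sum_comm]
  refine Finset.sum_congr rfl fun i _ => Finset.sum_congr rfl fun c _ => ?_
  ring

end Matrix

open Matrix

theorem stmt_11_general {n m : Type*} [Fintype n] [DecidableEq n]
    (U : Matrix n n ℂ) (hU : U ∈ Matrix.unitaryGroup n ℂ)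
    (T : Matrix n m ℂ)
    (W : Matrix (Fin 2 × n) (Fin 2 × n) ℂ)
    (hW : ∀ b i c j, W (b, i) (c, j) =
      (if b = 0 ∧ c = 1 then U i j else 0) + (if b = 1 ∧ c = 0 then Uᴴ i j else 0))
    (Tplus : Matrix (Fin 2 × n) m ℂ)
    (hTplus : ∀ b i k, Tplus (b, i) k = (Real.sqrt 2 : ℂ)⁻¹ * T i k) :
    W ∈ Matrix.unitaryGroup (Fin 2 × n) ℂ ∧ Wᴴ = W ∧ W * W = 1 ∧
    Tplusᴴ * W * Tplus = (1/2 : ℂ) • (Tᴴ * U * T + (Tᴴ * U * T)ᴴ) ∧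
    ((Tᴴ * U * T)ᴴ = Tᴴ * U * T → Tplusᴴ * W * Tplus = Tᴴ * U * T) := by
  set plus : Fin 2 → ℂ := fun _ => (Real.sqrt 2 : ℂ)⁻¹
  have hW' : W = offDiagDilation U := by
    ext ⟨b, i⟩ ⟨c, j⟩
    fin_cases b <;> fin_cases c <;> simp [hW, offDiagDilation]
  have hTplus' : Tplus = kroneckerVec plus T := by
    ext ⟨b, i⟩ k
    exact hTplus b i k
  subst hW' hTplus'
  have hhalf (i j : Fin 2) : star plus ⬝ᵥ single i j 1 *ᵥ plus = 1 / 2 := by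
    simp [plus, single_mulVec_eq, ← mul_inv, ← Complex.ofReal_mul]
  have hcompress : (kroneckerVec plus T)ᴴ * offDiagDilation U * kroneckerVec plus T =
      (1/2 : ℂ) • (Tᴴ * U * T + (Tᴴ * U * T)ᴴ) := by
    rw [offDiagDilation, Matrix.mul_add, Matrix.add_mul,
      conjTranspose_kroneckerVec_mul_kronecker_mul, conjTranspose_kroneckerVec_mul_kronecker_mul,
      hhalf, hhalf, ← smul_add]
    simp only [conjTranspose_mul, conjTranspose_conjTranspose, Matrix.mul_assoc]
  refine ⟨offDiagDilation_mem_unitaryGroup hU, conjTranspose_offDiagDilation U,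
    offDiagDilation_mul_self hU, hcompress, fun hherm => ?_⟩
  rw [hcompress, hherm]
  module

/-- For a unitary `U` and an isometry `T`, the operator
`W = |0⟩⟨1| ⊗ U + |1⟩⟨0| ⊗ U†` is a reflection (unitary and self-adjoint), and with
the isometry `T₊ v = |+⟩ ⊗ (T v)` one has `T₊† W T₊ = ½(T†UT + (T†UT)†)`; in
particular `T₊† W T₊ = Q` whenever `Q = T†UT` is hermitian. -/
theorem stmt_11 {n m : Type*} [Fintype n] [Fintype m] [DecidableEq n] [DecidableEq m]
    (U : Matrix n n ℂ) (hU : U ∈ Matrix.unitaryGroup n ℂ)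
    (T : Matrix n m ℂ) (hT : Tᴴ * T = 1)
    (W : Matrix (Fin 2 × n) (Fin 2 × n) ℂ)
    (hW : ∀ b i c j, W (b, i) (c, j) =
      (if b = 0 ∧ c = 1 then U i j else 0) + (if b = 1 ∧ c = 0 then Uᴴ i j else 0))
    (Tplus : Matrix (Fin 2 × n) m ℂ)
    (hTplus : ∀ b i k, Tplus (b, i) k = (Real.sqrt 2 : ℂ)⁻¹ * T i k) :
    W ∈ Matrix.unitaryGroup (Fin 2 × n) ℂ ∧ Wᴴ = W ∧ W * W = 1 ∧
    Tplusᴴ * W * Tplus = (1/2 : ℂ) • (Tᴴ * U * T + (Tᴴ * U * T)ᴴ) ∧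
    ((Tᴴ * U * T)ᴴ = Tᴴ * U * T → Tplusᴴ * W * Tplus = Tᴴ * U * T) :=
  stmt_11_general U hU T W hW Tplus hTplus
end

section
/- Let P = (p_{yx}) be a column-stochastic matrix on a finite set Ω with nonnegative entries, and let π be a probability distribution with π_x > 0 satisfying detailed balance p_{xy} π_y = p_{yx} π_x. For x ∈ Ω define |ψ_x⟩ = |x⟩ ⊗ Σ_y √(p_{yx}) |y⟩ ∈ ℂ^Ω ⊗ ℂ^Ω, let Π = Σ_x |ψ_x⟩⟨ψ_x|, let Swap be the swap operator on ℂ^Ω ⊗ ℂ^Ω, and define W(P) = Swap · (2Π − I). Then the vector |ψ_π⟩ = Σ_x √(π_x) |ψ_x⟩ = Σ_{x,y} √(π_x) √(p_{yx}) |x⟩ ⊗ |y⟩ satisfies W(P)|ψ_π⟩ = |ψ_π⟩, i.e. it is an eigenvector of Szegedy's walk operator with eigenvalue 1. -/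
/-!
Since `⟨ψ_x, ψ_π⟩ = √π_x Σ_y p_{yx} = √π_x`, the vector `ψ_π = Σ_x √π_x ψ_x` is fixed by the
projector `Π`, hence by the reflection `2Π − I`. Detailed balance gives
`√π_x √p_{yx} = √(p_{yx} π_x) = √(p_{xy} π_y) = √π_y √p_{xy}`, so `ψ_π` is also fixed by `Swap`.
-/

open Matrix

namespace Szegedy

lemma sum_vecMulVec_mulVec {ι n R : Type*} [Fintype ι] [Fintype n] [CommSemiring R]
    (a b : ι → n → R) (v : n → R) :
    (∑ i, vecMulVec (a i) (b i)) *ᵥ v = ∑ i, (b i ⬝ᵥ v) • a i := by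
  simp only [Matrix.sum_mulVec, vecMulVec_mulVec, op_smul_eq_smul]

variable {Ω : Type*}

noncomputable def edgeState [DecidableEq Ω] (P : Matrix Ω Ω ℝ) (x : Ω) : Ω × Ω → ℂ :=
  fun q => if q.1 = x then (√(P q.2 x) : ℂ) else 0

noncomputable def stationaryState (P : Matrix Ω Ω ℝ) (π : Ω → ℝ) : Ω × Ω → ℂ :=
  fun q => (√(π q.1) : ℂ) * (√(P q.2 q.1) : ℂ)

lemma stationaryState_swap {P : Matrix Ω Ω ℝ} (hP_nonneg : ∀ y x, 0 ≤ P y x) {π : Ω → ℝ}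
    (hdb : ∀ x y, P x y * π y = P y x * π x) (q : Ω × Ω) :
    stationaryState P π q.swap = stationaryState P π q := by
  obtain ⟨u, y⟩ := q
  simp only [stationaryState, Prod.swap_prod_mk, ← Complex.ofReal_mul,
    ← Real.sqrt_mul' _ (hP_nonneg _ _)]
  rw [mul_comm (π y), mul_comm (π u), hdb u y]

lemma eq_toMatrix_prodComm [DecidableEq Ω] {R : Type*} [Zero R] [One R]
    {S : Matrix (Ω × Ω) (Ω × Ω) R}
    (hS : ∀ p q, S p q = if p.1 = q.2 ∧ p.2 = q.1 then 1 else 0) :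
    S = (Equiv.prodComm Ω Ω).toPEquiv.toMatrix := by
  ext p q
  rw [hS, PEquiv.toMatrix_apply]
  congr 1
  simp [Prod.ext_iff, eq_comm, and_comm]

variable [Fintype Ω] [DecidableEq Ω]

lemma star_edgeState_dotProduct_stationaryState {P : Matrix Ω Ω ℝ}
    (hP_nonneg : ∀ y x, 0 ≤ P y x) (hP_stoch : ∀ x, ∑ y, P y x = 1) (π : Ω → ℝ) (x : Ω) :
    star (edgeState P x) ⬝ᵥ stationaryState P π = √(π x) := by
  have hterm : ∀ y, star (edgeState P x (x, y)) * stationaryState P π (x, y)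
      = (√(π x) : ℂ) * (P y x : ℂ) := fun y => by
    simp only [edgeState, stationaryState, if_pos, Complex.star_def, Complex.conj_ofReal]
    rw [mul_left_comm, ← Complex.ofReal_mul, Real.mul_self_sqrt (hP_nonneg y x)]
  rw [dotProduct, Fintype.sum_prod_type, Finset.sum_eq_single x]
  · simp only [Pi.star_apply, hterm, ← Finset.mul_sum, ← Complex.ofReal_sum, hP_stoch,
      Complex.ofReal_one, mul_one]
  · intro u _ hu
    simp [edgeState, hu]
  · simp

lemma sum_smul_edgeState (P : Matrix Ω Ω ℝ) (π : Ω → ℝ) :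
    ∑ x, (√(π x) : ℂ) • edgeState P x = stationaryState P π := by
  ext ⟨u, y⟩
  simp [edgeState, stationaryState]

lemma projector_mulVec_stationaryState {P : Matrix Ω Ω ℝ}
    (hP_nonneg : ∀ y x, 0 ≤ P y x) (hP_stoch : ∀ x, ∑ y, P y x = 1) (π : Ω → ℝ) :
    (∑ x, vecMulVec (edgeState P x) (star (edgeState P x))) *ᵥ stationaryState P π
      = stationaryState P π := by
  simp only [sum_vecMulVec_mulVec,
    star_edgeState_dotProduct_stationaryState hP_nonneg hP_stoch, sum_smul_edgeState]

end Szegedy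

open Szegedy in
theorem stmt_12_general {Ω : Type*} [Fintype Ω] [DecidableEq Ω]
    (P : Matrix Ω Ω ℝ)
    (hP_nonneg : ∀ y x, 0 ≤ P y x) (hP_stoch : ∀ x, ∑ y, P y x = 1)
    (π : Ω → ℝ)
    (hdb : ∀ x y, P x y * π y = P y x * π x)
    (ψ : Ω → (Ω × Ω) → ℂ)
    (hψ : ∀ x u y, ψ x (u, y) = if u = x then (Real.sqrt (P y x) : ℂ) else 0)
    (Pi : Matrix (Ω × Ω) (Ω × Ω) ℂ)
    (hPi : Pi = ∑ x, Matrix.vecMulVec (ψ x) (star (ψ x)))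
    (Swap : Matrix (Ω × Ω) (Ω × Ω) ℂ)
    (hSwap : ∀ p q, Swap p q = if p.1 = q.2 ∧ p.2 = q.1 then 1 else 0)
    (W : Matrix (Ω × Ω) (Ω × Ω) ℂ) (hW : W = Swap * (2 • Pi - 1))
    (ψπ : (Ω × Ω) → ℂ)
    (hψπ : ∀ x y, ψπ (x, y) = (Real.sqrt (π x) : ℂ) * (Real.sqrt (P y x) : ℂ)) :
    W.mulVec ψπ = ψπ := by
  obtain rfl : ψ = edgeState P := funext fun x => funext fun ⟨u, y⟩ => hψ x u y
  obtain rfl : ψπ = stationaryState P π := funext fun ⟨x, y⟩ => hψπ x y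
  have hPi_fix : Pi *ᵥ stationaryState P π = stationaryState P π := by
    rw [hPi, projector_mulVec_stationaryState hP_nonneg hP_stoch]
  have hreflect : (2 • Pi - 1) *ᵥ stationaryState P π = stationaryState P π := by
    rw [sub_mulVec, smul_mulVec, hPi_fix, one_mulVec, two_smul, add_sub_cancel_right]
  rw [hW, ← mulVec_mulVec, hreflect, eq_toMatrix_prodComm hSwap,
    PEquiv.toMatrix_toPEquiv_mulVec]
  exact funext (stationaryState_swap hP_nonneg hdb)

/-- For a reversible column-stochastic matrix `P` with stationary
distribution `π`, the vector `|ψ_π⟩ = Σ_{x,y} √(π_x) √(p_{yx}) |x⟩ ⊗ |y⟩` is a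
1-eigenvector of Szegedy's walk operator `W(P) = Swap · (2Π − I)`. -/
theorem stmt_12 {Ω : Type*} [Fintype Ω] [DecidableEq Ω]
    (P : Matrix Ω Ω ℝ)
    (hP_nonneg : ∀ y x, 0 ≤ P y x) (hP_stoch : ∀ x, ∑ y, P y x = 1)
    (π : Ω → ℝ) (hπ_pos : ∀ x, 0 < π x) (hπ_sum : ∑ x, π x = 1)
    (hdb : ∀ x y, P x y * π y = P y x * π x)
    (ψ : Ω → (Ω × Ω) → ℂ)
    (hψ : ∀ x u y, ψ x (u, y) = if u = x then (Real.sqrt (P y x) : ℂ) else 0)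
    (Pi : Matrix (Ω × Ω) (Ω × Ω) ℂ)
    (hPi : Pi = ∑ x, Matrix.vecMulVec (ψ x) (star (ψ x)))
    (Swap : Matrix (Ω × Ω) (Ω × Ω) ℂ)
    (hSwap : ∀ p q, Swap p q = if p.1 = q.2 ∧ p.2 = q.1 then 1 else 0)
    (W : Matrix (Ω × Ω) (Ω × Ω) ℂ) (hW : W = Swap * (2 • Pi - 1))
    (ψπ : (Ω × Ω) → ℂ)
    (hψπ : ∀ x y, ψπ (x, y) = (Real.sqrt (π x) : ℂ) * (Real.sqrt (P y x) : ℂ)) :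
    W.mulVec ψπ = ψπ :=
  stmt_12_general P hP_nonneg hP_stoch π hdb ψ hψ Pi hPi Swap hSwap W hW ψπ hψπ
end

section
/- Let S = (s_{yx}) be a symmetric stochastic matrix on a finite set Ω and a_{yx} ∈ [0,1] acceptance probabilities with a_{xx} = 1. For x ∈ Ω define |ψ_x⟩ = |x⟩ ⊗ Σ_y √(s_{yx}) |y⟩ ⊗ (√(a_{yx}) |0⟩ + √(1 − a_{yx}) |1⟩) ∈ ℂ^Ω ⊗ ℂ^Ω ⊗ ℂ², the isometry T = Σ_x |ψ_x⟩⟨x|, and the controlled-swap operator R = Swap ⊗ |0⟩⟨0| + I ⊗ I ⊗ |1⟩⟨1| (Swap acting on the first two registers). Then T† R T = Q, where Q is the matrix with off-diagonal entries q_{xy} = √(a_{yx}) √(a_{xy}) s_{yx} for x ≠ y and diagonal entries q_{xx} = 1 − Σ_{y≠x} a_{yx} s_{yx}. -/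
/-!
The controlled swap `R` is the permutation matrix of the basis involution
`σ (u, v, 0) = (v, u, 0)`, `σ (u, v, 1) = (u, v, 1)`, so
`(T† R T)_{xy} = Σ_p conj (T_{p x}) T_{σ p, y}`.
Since `T_{(u, v, b), x}` vanishes unless `u = x`, the accept branch `b = 0` contributes only
`p = (x, y, 0)`, namely `√(s_{yx} a_{yx}) √(s_{xy} a_{xy})`, and the reject branch `b = 1`
contributes only on the diagonal, namely `Σ_y s_{yx} (1 - a_{yx})`. Symmetry of `S` gives the
off-diagonal entries, and `Σ_y s_{yx} = 1` turns the diagonal into `1 - Σ_{y ≠ x} a_{yx} s_{yx}`.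
-/

open Matrix

namespace ControlledSwap

variable {Ω : Type*}

def ctrlSwap : Ω × Ω × Fin 2 → Ω × Ω × Fin 2
  | (u, v, b) => if b = 0 then (v, u, b) else (u, v, b)

theorem ctrlSwap_involutive : Function.Involutive (ctrlSwap (Ω := Ω)) := by
  rintro ⟨u, v, b⟩
  by_cases hb : b = 0 <;> simp [ctrlSwap, hb]

def ctrlSwapPerm : Equiv.Perm (Ω × Ω × Fin 2) :=
  Function.Involutive.toPerm _ ctrlSwap_involutive

theorem eq_permMatrix_ctrlSwapPerm [DecidableEq Ω] (R : Matrix (Ω × Ω × Fin 2) (Ω × Ω × Fin 2) ℂ)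
    (hR : ∀ p q, R p q =
      if p.2.2 = 0 ∧ q.2.2 = 0 then (if p.1 = q.2.1 ∧ p.2.1 = q.1 then 1 else 0)
      else if p.2.2 = 1 ∧ q.2.2 = 1 then (if p.1 = q.1 ∧ p.2.1 = q.2.1 then 1 else 0)
      else 0) :
    R = ctrlSwapPerm.permMatrix ℂ := by
  ext ⟨u, v, b⟩ ⟨u', v', b'⟩
  rw [hR, Equiv.Perm.permMatrix, PEquiv.toMatrix_apply]
  fin_cases b <;> fin_cases b' <;> simp [ctrlSwapPerm, ctrlSwap, eq_comm, and_comm]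

theorem conjTranspose_mul_ctrlSwap_mul_apply [Fintype Ω] [DecidableEq Ω]
    (F : Ω → Ω → Fin 2 → ℂ) (T : Matrix (Ω × Ω × Fin 2) Ω ℂ)
    (hT : ∀ u v b x, T (u, v, b) x = if u = x then F v x b else 0) (x y : Ω) :
    (Tᴴ * (ctrlSwapPerm (Ω := Ω)).permMatrix ℂ * T) x y =
      star (F y x 0) * F x y 0 + if x = y then ∑ v, star (F v x 1) * F v x 1 else 0 := by
  rw [Matrix.mul_assoc, Equiv.Perm.permMatrix, PEquiv.toMatrix_toPEquiv_mul]
  simp only [mul_apply, conjTranspose_apply, submatrix_apply, id, ctrlSwapPerm,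
    Function.Involutive.coe_toPerm, Fintype.sum_prod_type, Fin.sum_univ_two, ctrlSwap, hT]
  rcases eq_or_ne x y with rfl | hxy
  · simp [apply_ite star, ite_mul, Finset.sum_add_distrib]
  · simp [apply_ite star, ite_mul, Finset.sum_add_distrib, hxy, hxy.symm]

noncomputable def amplitude (S : Matrix Ω Ω ℝ) (a : Ω → Ω → ℝ) (y x : Ω) (b : Fin 2) : ℝ :=
  √(S y x) * if b = 0 then √(a y x) else √(1 - a y x)

theorem amplitude_mul_self {S : Matrix Ω Ω ℝ} {a : Ω → Ω → ℝ} {y x : Ω} (hS : 0 ≤ S y x)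
    (ha : a y x ∈ Set.Icc 0 1) (b : Fin 2) :
    amplitude S a y x b * amplitude S a y x b = (if b = 0 then a y x else 1 - a y x) * S y x := by
  rw [amplitude, mul_mul_mul_comm, Real.mul_self_sqrt hS, mul_comm]
  split_ifs
  exacts [congrArg (· * _) (Real.mul_self_sqrt ha.1),
    congrArg (· * _) (Real.mul_self_sqrt (sub_nonneg.2 ha.2))]

theorem mul_add_sum_one_sub_mul_eq [Fintype Ω] [DecidableEq Ω] (S : Matrix Ω Ω ℝ)
    (a : Ω → Ω → ℝ) (x : Ω) (hS : ∑ y, S y x = 1) :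
    a x x * S x x + ∑ y, (1 - a y x) * S y x = 1 - ∑ y ∈ Finset.univ \ {x}, a y x * S y x := by
  simp only [sub_mul, one_mul, Finset.sum_sub_distrib, hS,
    Finset.sum_eq_add_sum_sdiff_singleton_of_mem (Finset.mem_univ x) (fun y => a y x * S y x)]
  ring

end ControlledSwap

open ControlledSwap in
theorem stmt_15_general {Ω : Type*} [Fintype Ω] [DecidableEq Ω]
    (S : Matrix Ω Ω ℝ) (hS_nonneg : ∀ y x, 0 ≤ S y x)
    (hS_symm : Sᵀ = S) (hS_stoch : ∀ x, ∑ y, S y x = 1)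
    (a : Ω → Ω → ℝ) (ha_mem : ∀ y x, a y x ∈ Set.Icc (0:ℝ) 1)
    (T : Matrix (Ω × Ω × Fin 2) Ω ℂ)
    (hT : ∀ u y (b : Fin 2) x, T (u, y, b) x =
      (if u = x then (Real.sqrt (S y x) : ℂ) else 0) *
      (if b = 0 then (Real.sqrt (a y x) : ℂ) else (Real.sqrt (1 - a y x) : ℂ)))
    (R : Matrix (Ω × Ω × Fin 2) (Ω × Ω × Fin 2) ℂ)
    (hR : ∀ p q, R p q =
      if p.2.2 = 0 ∧ q.2.2 = 0 then (if p.1 = q.2.1 ∧ p.2.1 = q.1 then 1 else 0)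
      else if p.2.2 = 1 ∧ q.2.2 = 1 then (if p.1 = q.1 ∧ p.2.1 = q.2.1 then 1 else 0)
      else 0)
    (Q : Matrix Ω Ω ℂ)
    (hQ_off : ∀ x y, x ≠ y →
      Q x y = (Real.sqrt (a y x) : ℂ) * (Real.sqrt (a x y) : ℂ) * (S y x : ℂ))
    (hQ_diag : ∀ x, Q x x = 1 - ((∑ y ∈ Finset.univ \ {x}, a y x * S y x : ℝ) : ℂ)) :
    Tᴴ * R * T = Q := by
  have hT_amp : ∀ u y b x, T (u, y, b) x = if u = x then (amplitude S a y x b : ℂ) else 0 := by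
    intro u y b x
    rw [hT, ite_mul, zero_mul, amplitude]
    split_ifs <;> simp [*]
  have hstar : ∀ r : ℝ, star (r : ℂ) = r := Complex.conj_ofReal
  ext x y
  rw [eq_permMatrix_ctrlSwapPerm R hR, conjTranspose_mul_ctrlSwap_mul_apply _ T hT_amp]
  rcases eq_or_ne x y with rfl | hxy
  · simp only [if_true, hstar, ← Complex.ofReal_mul,
      amplitude_mul_self (hS_nonneg _ _) (ha_mem _ _), if_neg one_ne_zero, ← Complex.ofReal_sum,
      ← Complex.ofReal_add, mul_add_sum_one_sub_mul_eq S a x (hS_stoch x), hQ_diag,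
      Complex.ofReal_sub, Complex.ofReal_one]
  · have hS_xy : S x y = S y x := congr_fun₂ hS_symm y x
    simp only [if_neg hxy, add_zero, hQ_off x y hxy, hstar, amplitude, if_true, hS_xy]
    norm_cast
    linear_combination √(a y x) * √(a x y) * Real.mul_self_sqrt (hS_nonneg y x)

/-- Szegedy quantization of a propose-accept/reject Markov chain:
with `|ψ_x⟩ = |x⟩ ⊗ Σ_y √(s_{yx})|y⟩ ⊗ (√(a_{yx})|0⟩ + √(1−a_{yx})|1⟩)`,
`T = Σ_x |ψ_x⟩⟨x|`, and the controlled swap `R = Swap ⊗ |0⟩⟨0| + I ⊗ I ⊗ |1⟩⟨1|`,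
one has `T† R T = Q` with `q_{xy} = √(a_{yx}) √(a_{xy}) s_{yx}` off the diagonal and
`q_{xx} = 1 − Σ_{y≠x} a_{yx} s_{yx}` on the diagonal. -/
theorem stmt_15 {Ω : Type*} [Fintype Ω] [DecidableEq Ω]
    (S : Matrix Ω Ω ℝ) (hS_nonneg : ∀ y x, 0 ≤ S y x)
    (hS_symm : Sᵀ = S) (hS_stoch : ∀ x, ∑ y, S y x = 1)
    (a : Ω → Ω → ℝ) (ha_mem : ∀ y x, a y x ∈ Set.Icc (0:ℝ) 1)
    (ha_diag : ∀ x, a x x = 1)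
    (T : Matrix (Ω × Ω × Fin 2) Ω ℂ)
    (hT : ∀ u y (b : Fin 2) x, T (u, y, b) x =
      (if u = x then (Real.sqrt (S y x) : ℂ) else 0) *
      (if b = 0 then (Real.sqrt (a y x) : ℂ) else (Real.sqrt (1 - a y x) : ℂ)))
    (R : Matrix (Ω × Ω × Fin 2) (Ω × Ω × Fin 2) ℂ)
    (hR : ∀ p q, R p q =
      if p.2.2 = 0 ∧ q.2.2 = 0 then (if p.1 = q.2.1 ∧ p.2.1 = q.1 then 1 else 0)
      else if p.2.2 = 1 ∧ q.2.2 = 1 then (if p.1 = q.1 ∧ p.2.1 = q.2.1 then 1 else 0)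
      else 0)
    (Q : Matrix Ω Ω ℂ)
    (hQ_off : ∀ x y, x ≠ y →
      Q x y = (Real.sqrt (a y x) : ℂ) * (Real.sqrt (a x y) : ℂ) * (S y x : ℂ))
    (hQ_diag : ∀ x, Q x x = 1 - ((∑ y ∈ Finset.univ \ {x}, a y x * S y x : ℝ) : ℂ)) :
    Tᴴ * R * T = Q :=
  stmt_15_general S hS_nonneg hS_symm hS_stoch a ha_mem T hT R hR Q hQ_off hQ_diag
end

section
/- Let U = (φ_{yx}) be a symmetric unitary matrix on a finite set Ω (φ_{yx} = φ_{xy}) and set s_{yx} = |φ_{yx}|². Let a_{yx} ∈ [0,1] with a_{xx} = 1. For x ∈ Ω define |ψ_x⟩ = |x⟩ ⊗ Σ_y φ_{yx} |y⟩ ⊗ (√(a_{yx}) |0⟩ + √(1 − a_{yx}) |1⟩) ∈ ℂ^Ω ⊗ ℂ^Ω ⊗ ℂ², the isometry T = Σ_x |ψ_x⟩⟨x|, and R = Swap ⊗ |0⟩⟨0| + I ⊗ I ⊗ |1⟩⟨1|. Then T† R T = Q, where Q has off-diagonal entries q_{xy} = √(a_{yx}) √(a_{xy}) s_{yx} for x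 ≠ y and diagonal entries q_{xx} = 1 − Σ_{y≠x} a_{yx} s_{yx}. -/
open Matrix BigOperators

/-! The controlled swap exchanges the first two registers on the `|0⟩` branch and fixes the
`|1⟩` branch, so `⟨ψ_x|R|ψ_y⟩` is the overlap of the swapped accepted components, which meet
only in `|x⟩|y⟩|0⟩` and contribute `conj (φ_{yx} √a_{yx}) φ_{xy} √a_{xy}`, plus the overlap
of the rejected components, which is nonzero only for `x = y`, where it is
`Σ_v s_{vx} (1 - a_{vx})`. Symmetry of `φ` turns the first term into `√a_{yx} √a_{xy} s_{yx}`;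
on the diagonal, unitarity gives `Σ_v s_{vx} = 1`, and `a_{xx} = 1` leaves
`1 - Σ_{v ≠ x} a_{vx} s_{vx}`. -/

section ControlledSwap

variable {Ω 𝕜 : Type*} [DecidableEq Ω]

variable (Ω 𝕜) in
/-- `Swap ⊗ |0⟩⟨0| + I ⊗ I ⊗ |1⟩⟨1|` on `𝕜^Ω ⊗ 𝕜^Ω ⊗ 𝕜²`. -/
def controlledSwap [Zero 𝕜] [One 𝕜] : Matrix (Ω × Ω × Fin 2) (Ω × Ω × Fin 2) 𝕜 := fun p q =>
  if p.2.2 = 0 ∧ q.2.2 = 0 then (if p.1 = q.2.1 ∧ p.2.1 = q.1 then 1 else 0)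
  else if p.2.2 = 1 ∧ q.2.2 = 1 then (if p.1 = q.1 ∧ p.2.1 = q.2.1 then 1 else 0)
  else 0

/-- The matrix with columns `|x⟩ ⊗ Σ_y φ_{yx} |y⟩ ⊗ (α_{yx} |0⟩ + β_{yx} |1⟩)`. -/
def walkIsometry [Semiring 𝕜] (φ : Matrix Ω Ω 𝕜) (α β : Ω → Ω → 𝕜) :
    Matrix (Ω × Ω × Fin 2) Ω 𝕜 :=
  fun p x => (if p.1 = x then φ p.2.1 x else 0) * (if p.2.2 = 0 then α p.2.1 x else β p.2.1 x)

variable [Fintype Ω]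

theorem controlledSwap_mul_apply [Semiring 𝕜] (M : Matrix (Ω × Ω × Fin 2) Ω 𝕜)
    (u v : Ω) (b : Fin 2) (x : Ω) :
    (controlledSwap Ω 𝕜 * M) (u, v, b) x = if b = 0 then M (v, u, 0) x else M (u, v, 1) x := by
  fin_cases b <;> simp [controlledSwap, mul_apply, Fintype.sum_prod_type, ite_and]

theorem conjTranspose_mul_controlledSwap_mul_walkIsometry_apply [CommSemiring 𝕜] [StarRing 𝕜]
    (φ : Matrix Ω Ω 𝕜) (α β : Ω → Ω → 𝕜) (x y : Ω) :
    ((walkIsometry φ α β)ᴴ * controlledSwap Ω 𝕜 * walkIsometry φ α β) x y =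
      star (φ y x * α y x) * (φ x y * α x y) +
        if x = y then ∑ v, star (φ v x * β v x) * (φ v x * β v x) else 0 := by
  simp [Matrix.mul_assoc, mul_apply (M := (walkIsometry φ α β)ᴴ), Fintype.sum_prod_type,
    Fin.sum_univ_two, controlledSwap_mul_apply, walkIsometry, apply_ite star,
    Finset.sum_add_distrib, ite_mul]
  by_cases h : x = y <;> simp [h]

theorem sum_norm_sq_apply_of_mem_unitaryGroup [RCLike 𝕜] {U : Matrix Ω Ω 𝕜}
    (hU : U ∈ unitaryGroup Ω 𝕜) (x : Ω) : ∑ v, ‖U v x‖ ^ 2 = 1 := by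
  have h : (star U * U) x x = (1 : Matrix Ω Ω 𝕜) x x := by rw [mem_unitaryGroup_iff'.1 hU]
  simp only [mul_apply, star_apply, RCLike.star_def, RCLike.conj_mul, one_apply_eq] at h
  exact_mod_cast h

end ControlledSwap

theorem Complex.star_mul_sqrt_mul_mul_sqrt (z w : ℂ) (r t : ℝ) :
    star (z * √r) * (w * √t) = star z * w * (√r * √t : ℝ) := by
  simp only [star_mul', Complex.star_def, Complex.conj_ofReal]
  push_cast
  ring

/-- Szegedy quantization of a quantum-enhanced propose-accept/reject
Markov chain with symmetric unitary proposal `U = (φ_{yx})`, `s_{yx} = |φ_{yx}|²`: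
with `|ψ_x⟩ = |x⟩ ⊗ Σ_y φ_{yx}|y⟩ ⊗ (√(a_{yx})|0⟩ + √(1−a_{yx})|1⟩)` and the
controlled swap `R`, one has `T† R T = Q` with `q_{xy} = √(a_{yx}) √(a_{xy}) s_{yx}`
off the diagonal and `q_{xx} = 1 − Σ_{y≠x} a_{yx} s_{yx}` on the diagonal. -/
theorem stmt_16 {Ω : Type*} [Fintype Ω] [DecidableEq Ω]
    (φ : Matrix Ω Ω ℂ) (hφ_unitary : φ ∈ Matrix.unitaryGroup Ω ℂ) (hφ_symm : φᵀ = φ)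
    (s : Ω → Ω → ℝ) (hs : ∀ y x, s y x = ‖φ y x‖ ^ 2)
    (a : Ω → Ω → ℝ) (ha_mem : ∀ y x, a y x ∈ Set.Icc (0:ℝ) 1)
    (ha_diag : ∀ x, a x x = 1)
    (T : Matrix (Ω × Ω × Fin 2) Ω ℂ)
    (hT : ∀ u y (b : Fin 2) x, T (u, y, b) x =
      (if u = x then φ y x else 0) *
      (if b = 0 then (Real.sqrt (a y x) : ℂ) else (Real.sqrt (1 - a y x) : ℂ)))
    (R : Matrix (Ω × Ω × Fin 2) (Ω × Ω × Fin 2) ℂ)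
    (hR : ∀ p q, R p q =
      if p.2.2 = 0 ∧ q.2.2 = 0 then (if p.1 = q.2.1 ∧ p.2.1 = q.1 then 1 else 0)
      else if p.2.2 = 1 ∧ q.2.2 = 1 then (if p.1 = q.1 ∧ p.2.1 = q.2.1 then 1 else 0)
      else 0)
    (Q : Matrix Ω Ω ℂ)
    (hQ_off : ∀ x y, x ≠ y →
      Q x y = (Real.sqrt (a y x) : ℂ) * (Real.sqrt (a x y) : ℂ) * (s y x : ℂ))
    (hQ_diag : ∀ x, Q x x = 1 - ((∑ y ∈ Finset.univ \ {x}, a y x * s y x : ℝ) : ℂ)) :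
    Tᴴ * R * T = Q := by
  obtain rfl : R = controlledSwap Ω ℂ := Matrix.ext hR
  obtain rfl : T = walkIsometry φ (fun y x => √(a y x)) (fun y x => √(1 - a y x)) :=
    Matrix.ext fun ⟨u, v, b⟩ x => hT u v b x
  have hnorm : ∀ u v, star (φ u v) * φ u v = s u v := fun u v => by
    rw [hs, Complex.star_def, Complex.conj_mul', Complex.ofReal_pow]
  ext x y
  rw [conjTranspose_mul_controlledSwap_mul_walkIsometry_apply,
    Complex.star_mul_sqrt_mul_mul_sqrt]
  by_cases hxy : x = y
  · subst hxy
    have hs_sum : ∑ v, s v x = 1 := by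
      simpa only [hs] using sum_norm_sq_apply_of_mem_unitaryGroup hφ_unitary x
    have h_one_sub : ∀ v, 0 ≤ 1 - a v x := fun v => sub_nonneg.2 (ha_mem v x).2
    simp only [if_pos, Complex.star_mul_sqrt_mul_mul_sqrt, hnorm, ha_diag, Real.mul_self_sqrt,
      h_one_sub, zero_le_one, hQ_diag]
    have h_real : s x x * 1 + ∑ v, s v x * (1 - a v x) =
        1 - ∑ y ∈ Finset.univ \ {x}, a y x * s y x := by
      simp only [mul_one_sub, Finset.sum_sub_distrib, hs_sum, fun v => mul_comm (s v x) (a v x)]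
      rw [Finset.sum_eq_add_sum_sdiff_singleton_of_mem (Finset.mem_univ x), ha_diag]
      ring
    exact_mod_cast h_real
  · have hφ_comm : φ x y = φ y x := congrFun₂ hφ_symm y x
    rw [if_neg hxy, add_zero, hQ_off x y hxy, hφ_comm, hnorm]
    push_cast
    ring
end

section
/- Let Q be an N×N hermitian complex matrix all of whose eigenvalues lie in the half-open interval (−1, 1]. Then there exist an isometry T : ℂ^N → ℂ^N ⊗ ℂ² (i.e. T†T = I) and a reflection S on ℂ^N ⊗ ℂ² (a self-adjoint unitary; one may take S = I ⊗ Z with Z = diag(1,−1)) such that T† S T = Q. -/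
/-!
Put `c = √((1 + Q)/2)` and `s = √((1 - Q)/2)`, defined by functional calculus since the spectrum
of `Q` lies in `[-1, 1]`. Then `c² + s² = 1` and `c² - s² = Q`, so the block column `T = [c; s]`
is an isometry and `Tᴴ (1 ⊗ Z) T = c² - s² = Q`.
-/

open Matrix
open scoped Kronecker

theorem IsSelfAdjoint.exists_star_mul_self_add_eq_one_sub_eq {A : Type*} [Ring A] [StarRing A]
    [Algebra ℝ A] [TopologicalSpace A] [ContinuousFunctionalCalculus ℝ A IsSelfAdjoint]
    {a : A} (ha : IsSelfAdjoint a) (hspec : spectrum ℝ a ⊆ Set.Icc (-1) 1) :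
    ∃ c s : A, star c * c + star s * s = 1 ∧ star c * c - star s * s = a := by
  set f : ℝ → ℝ := fun x => √((1 + x) / 2)
  set g : ℝ → ℝ := fun x => √((1 - x) / 2)
  have hf : ∀ x ∈ spectrum ℝ a, f x * f x = (1 + x) / 2 := fun x hx =>
    Real.mul_self_sqrt (by linarith [(hspec hx).1])
  have hg : ∀ x ∈ spectrum ℝ a, g x * g x = (1 - x) / 2 := fun x hx =>
    Real.mul_self_sqrt (by linarith [(hspec hx).2])
  refine ⟨cfc f a, cfc g a, ?_, ?_⟩
  all_goals
    rw [(cfc_predicate f a).star_eq, (cfc_predicate g a).star_eq, ← cfc_mul f f a,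
      ← cfc_mul g g a]
  · rw [← cfc_add .., ← cfc_const_one ℝ a]
    exact cfc_congr fun x hx => by simp only [hf x hx, hg x hx]; ring
  · rw [← cfc_sub ..]
    exact (cfc_congr fun x hx => by simp only [hf x hx, hg x hx]; ring).trans (cfc_id' ℝ a)

namespace Matrix

variable {m n R : Type*} [Fintype m] [Ring R]

def vstack (A B : Matrix m n R) : Matrix (m × Fin 2) n R :=
  of fun p k => ![A, B] p.2 p.1 k

theorem conjTranspose_vstack_mul_vstack [StarRing R] {l : Type*} (A B : Matrix m n R)
    (C D : Matrix m l R) : (vstack A B)ᴴ * vstack C D = Aᴴ * C + Bᴴ * D := by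
  ext i k
  simp [vstack, mul_apply, Fintype.sum_prod_type, Fin.sum_univ_two, Finset.sum_add_distrib]

def pauliZ : Matrix (Fin 2) (Fin 2) R := diagonal ![1, -1]

theorem one_kronecker_pauliZ_mul_vstack [DecidableEq m] (C D : Matrix m n R) :
    ((1 : Matrix m m R) ⊗ₖ pauliZ) * vstack C D = vstack C (-D) := by
  ext ⟨i, j⟩ k
  fin_cases j <;>
    simp [vstack, pauliZ, mul_apply, Fintype.sum_prod_type, Fin.sum_univ_two, one_apply]

theorem conjTranspose_pauliZ [StarRing R] : (pauliZ : Matrix (Fin 2) (Fin 2) R)ᴴ = pauliZ := by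
  ext i j; fin_cases i <;> fin_cases j <;> simp [pauliZ]

theorem pauliZ_mul_self : (pauliZ : Matrix (Fin 2) (Fin 2) R) * pauliZ = 1 := by
  ext i j; fin_cases i <;> fin_cases j <;> simp [pauliZ]

theorem pauliZ_mem_unitary [StarRing R] : (pauliZ : Matrix (Fin 2) (Fin 2) R) ∈ unitary _ := by
  rw [Unitary.mem_iff, star_eq_conjTranspose, conjTranspose_pauliZ, and_self, pauliZ_mul_self]

end Matrix

/-- Any hermitian matrix `Q` with all eigenvalues in `(−1, 1]` can be
written as `Q = T† S T` for an isometry `T : ℂ^N → ℂ^N ⊗ ℂ²` and a reflection `S`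
(a self-adjoint unitary) on `ℂ^N ⊗ ℂ²`. -/
theorem stmt_17 (N : ℕ) (Q : Matrix (Fin N) (Fin N) ℂ)
    (hQ : Q.IsHermitian)
    (heig : ∀ i, hQ.eigenvalues i ∈ Set.Ioc (-1 : ℝ) 1) :
    ∃ (T : Matrix (Fin N × Fin 2) (Fin N) ℂ)
      (S : Matrix (Fin N × Fin 2) (Fin N × Fin 2) ℂ),
      Tᴴ * T = 1 ∧ Sᴴ = S ∧ S ∈ Matrix.unitaryGroup (Fin N × Fin 2) ℂ ∧
      Tᴴ * S * T = Q := by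
  have hspec : spectrum ℝ Q ⊆ Set.Icc (-1) 1 := by
    rw [hQ.spectrum_real_eq_range_eigenvalues]
    rintro _ ⟨i, rfl⟩
    exact Set.Ioc_subset_Icc_self (heig i)
  obtain ⟨C, D, hsum, hdiff⟩ := hQ.isSelfAdjoint.exists_star_mul_self_add_eq_one_sub_eq hspec
  refine ⟨vstack C D, 1 ⊗ₖ pauliZ, ?_, ?_, ?_, ?_⟩
  · rwa [conjTranspose_vstack_mul_vstack]
  · rw [conjTranspose_kronecker, conjTranspose_one, conjTranspose_pauliZ]
  · exact kronecker_mem_unitary (one_mem _) pauliZ_mem_unitary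
  · rwa [Matrix.mul_assoc, one_kronecker_pauliZ_mul_vstack, conjTranspose_vstack_mul_vstack,
      Matrix.mul_neg, ← sub_eq_add_neg]
end

section
/- Let T : ℂ^N → ℂ^M be an isometry (T†T = I), S a reflection on ℂ^M (self-adjoint unitary), Q = T†ST, Π = TT†, and U = S(2Π − I). Suppose φ ∈ ℂ^N is a unit eigenvector of Q with eigenvalue λ ∈ (−1, 1), and set χ = Tφ and μ^± = λ ± i√(1−λ²) = e^{±i arccos(λ)}. Then the vectors ψ^± = χ − μ^± Sχ satisfy U ψ^± = μ^± ψ^±, i.e. they are eigenvectors of the walk operator U with eigenvalues e^{±i arccos(λ)}. -/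
open Matrix BigOperators

/-!
The range of `T` is fixed by `Π`, and `Π S (T φ) = T Q φ = λ T φ`. Hence the plane spanned by
`χ = T φ` and `S χ` is invariant under `U = S (2Π − 1)`, which acts on it in the basis `χ, S χ`
by the companion matrix of `μ² − 2λμ + 1`. For each root `μ` of that polynomial
`χ − μ S χ` is an eigenvector, and the roots are `e^{± i arccos λ}` because `λ = cos (arccos λ)`.
-/

namespace Matrix

variable {R M N : Type*} [Fintype M] [Fintype N]

lemma mul_conjTranspose_mulVec_mulVec_of_conjTranspose_mul_self [CommSemiring R] [StarRing R]
    [DecidableEq N] {T : Matrix M N R} (hT : Tᴴ * T = 1) (φ : N → R) :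
    (T * Tᴴ) *ᵥ (T *ᵥ φ) = T *ᵥ φ := by
  rw [mulVec_mulVec, Matrix.mul_assoc, hT, Matrix.mul_one]

lemma mul_conjTranspose_mulVec_mulVec_eq_smul [CommSemiring R] [StarRing R]
    (T : Matrix M N R) (S : Matrix M M R) {φ : N → R} {c : R}
    (heig : (Tᴴ * S * T) *ᵥ φ = c • φ) :
    (T * Tᴴ) *ᵥ (S *ᵥ (T *ᵥ φ)) = c • (T *ᵥ φ) := by
  rw [mulVec_mulVec, mulVec_mulVec, Matrix.mul_assoc, Matrix.mul_assoc, ← Matrix.mul_assoc Tᴴ,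
    ← mulVec_mulVec, heig, mulVec_smul]

lemma mul_two_nsmul_sub_one_mulVec_eq_smul [CommRing R] [DecidableEq M] {S P : Matrix M M R}
    (hS : S * S = 1) {χ : M → R} {c μ : R} (hPχ : P *ᵥ χ = χ) (hPSχ : P *ᵥ (S *ᵥ χ) = c • χ)
    (hμ : μ ^ 2 = 2 * c * μ - 1) :
    (S * (2 • P - 1)) *ᵥ (χ - μ • S *ᵥ χ) = μ • (χ - μ • S *ᵥ χ) := by
  have hSSχ : S *ᵥ (S *ᵥ χ) = χ := by rw [mulVec_mulVec, hS, one_mulVec]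
  simp only [← mulVec_mulVec, sub_mulVec, one_mulVec, smul_mulVec, mulVec_sub, mulVec_smul,
    hPχ, hPSχ, hSSχ]
  linear_combination (norm := module) hμ • S *ᵥ χ

end Matrix

namespace Complex

lemma exp_I_mul_sq (z : ℂ) : exp (I * z) ^ 2 = 2 * cos z * exp (I * z) - 1 := by
  have h : exp (I * z) * exp (-(I * z)) = 1 := by rw [← exp_add]; simp
  simp only [cos, neg_mul, mul_comm z I]
  linear_combination -h

lemma exp_I_mul_arccos {x : ℝ} (hx₁ : -1 ≤ x) (hx₂ : x ≤ 1) :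
    exp (I * Real.arccos x) = x + I * Real.sqrt (1 - x ^ 2) := by
  rw [mul_comm, exp_mul_I, ← ofReal_cos, ← ofReal_sin, Real.cos_arccos hx₁ hx₂, Real.sin_arccos]
  ring

lemma exp_neg_I_mul_arccos {x : ℝ} (hx₁ : -1 ≤ x) (hx₂ : x ≤ 1) :
    exp (-(I * Real.arccos x)) = x - I * Real.sqrt (1 - x ^ 2) := by
  rw [show -(I * Real.arccos x) = ((-Real.arccos x : ℝ) : ℂ) * I by push_cast; ring, exp_mul_I,
    ← ofReal_cos, ← ofReal_sin, Real.cos_neg, Real.sin_neg, Real.cos_arccos hx₁ hx₂,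
    Real.sin_arccos]
  push_cast
  ring

end Complex

theorem stmt_18_general {M N : Type*} [Fintype M] [Fintype N] [DecidableEq M] [DecidableEq N]
    (T : Matrix M N ℂ) (hT : Tᴴ * T = 1)
    (S : Matrix M M ℂ) (hS_inv : S * S = 1)
    (Q : Matrix N N ℂ) (hQ : Q = Tᴴ * S * T)
    (U : Matrix M M ℂ) (hU : U = S * (2 • (T * Tᴴ) - 1))
    (φ : N → ℂ)
    (lam : ℝ) (hlam : lam ∈ Set.Ioo (-1 : ℝ) 1)
    (heig : Q.mulVec φ = (lam : ℂ) • φ)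
    (μp μm : ℂ)
    (hμp : μp = (lam : ℂ) + Complex.I * (Real.sqrt (1 - lam ^ 2) : ℂ))
    (hμm : μm = (lam : ℂ) - Complex.I * (Real.sqrt (1 - lam ^ 2) : ℂ))
    (χ : M → ℂ) (hχ : χ = T.mulVec φ) :
    U.mulVec (χ - μp • S.mulVec χ) = μp • (χ - μp • S.mulVec χ) ∧
    U.mulVec (χ - μm • S.mulVec χ) = μm • (χ - μm • S.mulVec χ) ∧
    μp = Complex.exp (Complex.I * (Real.arccos lam : ℂ)) ∧
    μm = Complex.exp (-(Complex.I * (Real.arccos lam : ℂ))) := by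
  obtain ⟨hlam₁, hlam₂⟩ := hlam
  have hcos : Complex.cos (Real.arccos lam) = lam := by
    rw [← Complex.ofReal_cos, Real.cos_arccos hlam₁.le hlam₂.le]
  have hμp_exp := (Complex.exp_I_mul_arccos hlam₁.le hlam₂.le).trans hμp.symm
  have hμm_exp := (Complex.exp_neg_I_mul_arccos hlam₁.le hlam₂.le).trans hμm.symm
  have hμp_root : μp ^ 2 = 2 * lam * μp - 1 := by
    rw [← hμp_exp, Complex.exp_I_mul_sq, hcos]
  have hμm_root : μm ^ 2 = 2 * lam * μm - 1 := by
    rw [← hμm_exp, ← mul_neg, Complex.exp_I_mul_sq, Complex.cos_neg, hcos]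
  have hPχ : (T * Tᴴ) *ᵥ χ = χ :=
    hχ ▸ mul_conjTranspose_mulVec_mulVec_of_conjTranspose_mul_self hT φ
  have hPSχ : (T * Tᴴ) *ᵥ (S *ᵥ χ) = (lam : ℂ) • χ :=
    hχ ▸ mul_conjTranspose_mulVec_mulVec_eq_smul T S (hQ ▸ heig)
  subst hU
  exact ⟨mul_two_nsmul_sub_one_mulVec_eq_smul hS_inv hPχ hPSχ hμp_root,
    mul_two_nsmul_sub_one_mulVec_eq_smul hS_inv hPχ hPSχ hμm_root, hμp_exp.symm, hμm_exp.symm⟩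

/-- For an isometry `T`, a reflection `S`, `Q = T†ST`, `Π = TT†`,
and `U = S(2Π − I)`, if `φ` is a unit eigenvector of `Q` with eigenvalue
`λ ∈ (−1,1)`, `χ = Tφ`, and `μ^± = λ ± i√(1−λ²) = e^{±i arccos λ}`, then the
vectors `ψ^± = χ − μ^± Sχ` satisfy `U ψ^± = μ^± ψ^±`. -/
theorem stmt_18 {M N : Type*} [Fintype M] [Fintype N] [DecidableEq M] [DecidableEq N]
    (T : Matrix M N ℂ) (hT : Tᴴ * T = 1)
    (S : Matrix M M ℂ) (hS_sa : Sᴴ = S) (hS_inv : S * S = 1)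
    (Q : Matrix N N ℂ) (hQ : Q = Tᴴ * S * T)
    (U : Matrix M M ℂ) (hU : U = S * (2 • (T * Tᴴ) - 1))
    (φ : N → ℂ) (hφ_unit : dotProduct (star φ) φ = 1)
    (lam : ℝ) (hlam : lam ∈ Set.Ioo (-1 : ℝ) 1)
    (heig : Q.mulVec φ = (lam : ℂ) • φ)
    (μp μm : ℂ)
    (hμp : μp = (lam : ℂ) + Complex.I * (Real.sqrt (1 - lam ^ 2) : ℂ))
    (hμm : μm = (lam : ℂ) - Complex.I * (Real.sqrt (1 - lam ^ 2) : ℂ))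
    (χ : M → ℂ) (hχ : χ = T.mulVec φ) :
    U.mulVec (χ - μp • S.mulVec χ) = μp • (χ - μp • S.mulVec χ) ∧
    U.mulVec (χ - μm • S.mulVec χ) = μm • (χ - μm • S.mulVec χ) ∧
    μp = Complex.exp (Complex.I * (Real.arccos lam : ℂ)) ∧
    μm = Complex.exp (-(Complex.I * (Real.arccos lam : ℂ))) :=
  stmt_18_general T hT S hS_inv Q hQ U hU φ lam hlam heig μp μm hμp hμm χ hχ
end
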